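/- arXiv:2301.00791 — 6 statements merged into one kernel-verified Lean document; each statement's English description precedes it below -/
import Mathlib

section
/- Let q be a prime power and F a finite field with q elements, and let t > 0 be a real number. Define ν : ℕ → ℝ by ν(λ) = q^{−λ(λ−1)/2 − tλ} / ( η_q(λ) · ∏_{i=0}^{∞} (1 + q^{−i−t}) ). Then for every ρ ∈ ℕ, the series ∑_{λ=0}^{∞} ν(λ) · |Sur_F(F^λ, F^ρ)| converges and its sum equals q^{(ρ² + ρ)/2 − tρ}, where |Sur_F(F^λ, F^ρ)| denotes the number of surjective F-linear maps F^λ → F^ρ. In particular (taking ρ = 0), ∑_{λ=0}^{∞} ν(λ) = 1. -/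
open scoped BigOperators

/-- `η_q(k) = ∏_{i=1}^{k} (1 - q^{-i})`. -/
noncomputable def etaQ (q : ℝ) (k : ℕ) : ℝ :=
  ∏ i ∈ Finset.range k, (1 - q ^ (-(i : ℝ) - 1))

/-- The number of surjective `F`-linear maps `F^a → F^b`. -/
noncomputable def surCount (F : Type) [Field F] (a b : ℕ) : ℕ :=
  Nat.card {f : (Fin a → F) →ₗ[F] (Fin b → F) // Function.Surjective f}

/-!
Put `u = q⁻¹` and `x = q^{-t}`, so that `η_q(m) = (u; u)_m` and
`ν(λ) = x^λ u^{λ(λ-1)/2} / ((u; u)_λ ∏_{i ≥ 0} (1 + x u^i))`. Euler's identity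
`S(x) := ∑_m x^m u^{m(m-1)/2} / (u; u)_m = ∏_{i ≥ 0} (1 + x u^i)` gives `∑ ν = 1`; it follows from the
functional equation `S(x) = (1 + x) S(x u)`, iterated `N` times, and `S(x u^N) → 1`.
A surjection `F^λ → F^ρ` is a matrix with `ρ` linearly independent rows, so there are
`q^{λρ} (u; u)_λ / (u; u)_{λ-ρ}` of them: weighting by this count shifts Euler's series by `ρ`
and multiplies its terms by `x^ρ q^{ρ(ρ+1)/2}`.
-/

open Filter Finset Topology

/-- The q-Pochhammer symbol `(u; u)_m`; thus `η_q(m) = qPoch q⁻¹ m`. -/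
noncomputable def qPoch (u : ℝ) (m : ℕ) : ℝ := ∏ i ∈ range m, (1 - u ^ (i + 1))

noncomputable def eulerTerm (u x : ℝ) (m : ℕ) : ℝ := x ^ m * u ^ m.choose 2 / qPoch u m

lemma abs_inv_lt_one_of_one_lt {Q : ℝ} (hQ : 1 < Q) : |Q⁻¹| < 1 := by
  rw [abs_inv, abs_of_pos (one_pos.trans hQ)]
  exact inv_lt_one_of_one_lt₀ hQ

section Euler

variable {u : ℝ}

lemma one_sub_pow_succ_ne_zero (hu : |u| < 1) (i : ℕ) : 1 - u ^ (i + 1) ≠ 0 := by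
  refine sub_ne_zero.2 fun h => ?_
  have := pow_lt_one₀ (abs_nonneg u) hu i.succ_ne_zero
  rw [← abs_pow, ← h, abs_one] at this
  exact this.false

lemma qPoch_ne_zero (hu : |u| < 1) (m : ℕ) : qPoch u m ≠ 0 :=
  prod_ne_zero_iff.2 fun i _ => one_sub_pow_succ_ne_zero hu i

lemma qPoch_pos (hu₀ : 0 ≤ u) (hu₁ : u < 1) (m : ℕ) : 0 < qPoch u m :=
  prod_pos fun i _ => sub_pos.2 (pow_lt_one₀ hu₀ hu₁ i.succ_ne_zero)

lemma qPoch_succ (u : ℝ) (m : ℕ) : qPoch u (m + 1) = qPoch u m * (1 - u ^ (m + 1)) :=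
  prod_range_succ _ m

lemma qPoch_add (u : ℝ) (n ρ : ℕ) :
    qPoch u (n + ρ) = qPoch u n * ∏ i ∈ range ρ, (1 - u ^ (n + ρ - i)) := by
  rw [qPoch, qPoch, prod_range_add, ← prod_range_reflect _ ρ]
  refine congrArg _ (prod_congr rfl fun j hj => ?_)
  rw [show n + (ρ - 1 - j) + 1 = n + ρ - j by have := mem_range.1 hj; omega]

@[simp]
lemma eulerTerm_zero_right (u x : ℝ) : eulerTerm u x 0 = 1 := by
  simp [eulerTerm, qPoch]

lemma eulerTerm_zero_of_ne_zero (u : ℝ) {m : ℕ} (hm : m ≠ 0) : eulerTerm u 0 m = 0 := by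
  simp [eulerTerm, zero_pow hm]

lemma eulerTerm_succ (u x : ℝ) (m : ℕ) :
    eulerTerm u x (m + 1) = eulerTerm u x m * (x * u ^ m / (1 - u ^ (m + 1))) := by
  rw [eulerTerm, eulerTerm, qPoch_succ, div_mul_div_comm, Nat.choose_succ_succ',
    Nat.choose_one_right]
  ring

lemma eulerTerm_mul_pow (u x : ℝ) (m : ℕ) : eulerTerm u (x * u) m = eulerTerm u x m * u ^ m := by
  simp only [eulerTerm]
  ring

lemma eulerTerm_succ_eq_add (hu : |u| < 1) (x : ℝ) (m : ℕ) :
    eulerTerm u x (m + 1) = eulerTerm u (x * u) (m + 1) + x * eulerTerm u (x * u) m := by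
  have := one_sub_pow_succ_ne_zero hu m
  rw [eulerTerm_mul_pow, eulerTerm_mul_pow, eulerTerm_succ]
  field_simp
  ring

lemma summable_norm_eulerTerm (hu : |u| < 1) (x : ℝ) : Summable fun m => ‖eulerTerm u x m‖ := by
  have hratio : Tendsto (fun m : ℕ => x * u ^ m / (1 - u ^ (m + 1))) atTop (𝓝 0) := by
    have hpow := tendsto_pow_atTop_nhds_zero_of_abs_lt_one hu
    have h := (hpow.const_mul x).div ((hpow.comp (tendsto_add_atTop_nat 1)).const_sub 1)
      (by norm_num : (1 : ℝ) - 0 ≠ 0)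
    rw [mul_zero, sub_zero, zero_div] at h
    exact h
  refine summable_of_ratio_norm_eventually_le (r := 1 / 2) (by norm_num) ?_
  filter_upwards [hratio.norm.eventually (ge_mem_nhds (by norm_num : ‖(0 : ℝ)‖ < 1 / 2))]
    with m hm
  rw [norm_norm, norm_norm, eulerTerm_succ, norm_mul, mul_comm]
  exact mul_le_mul_of_nonneg_right hm (norm_nonneg _)

lemma summable_eulerTerm (hu : |u| < 1) (x : ℝ) : Summable (eulerTerm u x) :=
  (summable_norm_eulerTerm hu x).of_norm

lemma tsum_eulerTerm_eq_mul (hu : |u| < 1) (x : ℝ) :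
    ∑' m, eulerTerm u x m = (1 + x) * ∑' m, eulerTerm u (x * u) m := by
  have hs := summable_eulerTerm hu (x * u)
  calc ∑' m, eulerTerm u x m = eulerTerm u x 0 + ∑' m, eulerTerm u x (m + 1) :=
        (summable_eulerTerm hu x).tsum_eq_zero_add
    _ = 1 + ∑' m, (eulerTerm u (x * u) (m + 1) + x * eulerTerm u (x * u) m) := by
        rw [eulerTerm_zero_right, tsum_congr (eulerTerm_succ_eq_add hu x)]
    _ = 1 + ∑' m, eulerTerm u (x * u) (m + 1) + x * ∑' m, eulerTerm u (x * u) m := by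
        rw [Summable.tsum_add ((summable_nat_add_iff 1).2 hs) (hs.mul_left x), tsum_mul_left,
          add_assoc]
    _ = (1 + x) * ∑' m, eulerTerm u (x * u) m := by
        rw [hs.tsum_eq_zero_add, eulerTerm_zero_right]
        ring

lemma tsum_eulerTerm_eq_prod_mul (hu : |u| < 1) (x : ℝ) (N : ℕ) :
    ∑' m, eulerTerm u x m =
      (∏ i ∈ range N, (1 + x * u ^ i)) * ∑' m, eulerTerm u (x * u ^ N) m := by
  induction N with
  | zero => simp
  | succ N ih =>
    rw [ih, tsum_eulerTerm_eq_mul hu, prod_range_succ, pow_succ, mul_assoc x]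
    ring

lemma tendsto_tsum_eulerTerm_mul_pow (hu : |u| < 1) (x : ℝ) :
    Tendsto (fun N : ℕ => ∑' m, eulerTerm u (x * u ^ N) m) atTop (𝓝 1) := by
  have hlim : Tendsto (fun N : ℕ => x * u ^ N) atTop (𝓝 0) := by
    simpa using (tendsto_pow_atTop_nhds_zero_of_abs_lt_one hu).const_mul x
  have hcont (m : ℕ) : Continuous fun y => eulerTerm u y m := by
    unfold eulerTerm
    fun_prop
  have hone : ∑' m, eulerTerm u 0 m = 1 := by
    rw [tsum_eq_single 0 fun m hm => eulerTerm_zero_of_ne_zero u hm, eulerTerm_zero_right]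
  rw [← hone]
  refine tendsto_tsum_of_dominated_convergence (summable_norm_eulerTerm hu x)
    (fun m => (hcont m).continuousAt.tendsto.comp hlim) (Eventually.of_forall fun N m => ?_)
  have : eulerTerm u (x * u ^ N) m = eulerTerm u x m * (u ^ N) ^ m := by
    simp only [eulerTerm]
    ring
  rw [this, norm_mul]
  refine mul_le_of_le_one_right (norm_nonneg _) ?_
  rw [norm_pow, norm_pow, Real.norm_eq_abs]
  exact pow_le_one₀ (by positivity) (pow_le_one₀ (abs_nonneg u) hu.le)

theorem hasProd_one_add_mul_pow (hu : |u| < 1) (x : ℝ) :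
    HasProd (fun i => 1 + x * u ^ i) (∑' m, eulerTerm u x m) := by
  have hmult : Multipliable fun i => 1 + x * u ^ i :=
    Real.multipliable_one_add_of_summable ((summable_geometric_of_abs_lt_one hu).mul_left x)
  rw [hmult.hasProd_iff_tendsto_nat]
  have hlim := tendsto_tsum_eulerTerm_mul_pow hu x
  have hquot : Tendsto (fun N : ℕ => (∑' m, eulerTerm u x m) / ∑' m, eulerTerm u (x * u ^ N) m)
      atTop (𝓝 (∑' m, eulerTerm u x m)) := by
    have h := (tendsto_const_nhds (x := ∑' m, eulerTerm u x m)).div hlim one_ne_zero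
    rwa [div_one] at h
  refine hquot.congr' ?_
  filter_upwards [hlim.eventually_ne one_ne_zero] with N hN
  rw [tsum_eulerTerm_eq_prod_mul hu x N, mul_div_cancel_right₀ _ hN]

lemma one_le_tsum_eulerTerm (hu₀ : 0 ≤ u) (hu₁ : u < 1) {x : ℝ} (hx : 0 ≤ x) :
    1 ≤ ∑' m, eulerTerm u x m := by
  have hu : |u| < 1 := by rwa [abs_of_nonneg hu₀]
  simpa using (summable_eulerTerm hu x).le_tsum 0 fun m _ =>
    div_nonneg (by positivity) (qPoch_pos hu₀ hu₁ m).le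

end Euler

section Surjections

open Module

theorem Matrix.surjective_toLin'_iff {K m n : Type*} [Field K] [Fintype m] [Fintype n]
    [DecidableEq n] (M : Matrix m n K) :
    Function.Surjective (Matrix.toLin' M) ↔ LinearIndependent K M.row := by
  rw [← LinearMap.range_eq_top, Submodule.eq_top_iff_finrank_eq,
    linearIndependent_iff_card_eq_finrank_span, Set.finrank, ← M.rank_eq_finrank_span_row,
    finrank_fintype_fun_eq_card, eq_comm, Matrix.rank, Matrix.toLin'_apply']

variable {F : Type} [Field F]

lemma surCount_eq_prod [Fintype F] {a b : ℕ} (h : b ≤ a) :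
    surCount F a b = ∏ i ∈ range b, (Fintype.card F ^ a - Fintype.card F ^ i) := by
  classical
  have e : {f : (Fin a → F) →ₗ[F] (Fin b → F) // Function.Surjective f} ≃
      {s : Fin b → Fin a → F // LinearIndependent F s} :=
    LinearMap.toMatrix'.toEquiv.subtypeEquiv fun f => by
      change _ ↔ LinearIndependent F (LinearMap.toMatrix' f).row
      rw [← Matrix.surjective_toLin'_iff, Matrix.toLin'_toMatrix']
  rw [surCount, Nat.card_congr e, card_linearIndependent (by simpa using h), prod_range]
  simp

lemma surCount_eq_zero {a b : ℕ} (h : a < b) : surCount F a b = 0 := by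
  rw [surCount, Nat.card_eq_zero]
  left
  refine ⟨fun ⟨f, hf⟩ => ?_⟩
  have := LinearMap.finrank_le_finrank_of_surjective hf
  simp only [finrank_fintype_fun_eq_card, Fintype.card_fin] at this
  omega

end Surjections

lemma pow_sub_pow_eq_mul_one_sub {K : Type*} [Field K] {Q : K} (hQ : Q ≠ 0) {i l : ℕ}
    (h : i ≤ l) : Q ^ l - Q ^ i = Q ^ l * (1 - Q⁻¹ ^ (l - i)) := by
  rw [mul_one_sub, inv_pow, ← pow_sub₀ Q hQ (Nat.sub_le l i),
    Nat.sub_sub_self h]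

lemma surCount_add_eq {F : Type} [Field F] [Fintype F] (n ρ : ℕ) :
    (surCount F (n + ρ) ρ : ℝ) = (Fintype.card F : ℝ) ^ ((n + ρ) * ρ) *
      (qPoch (Fintype.card F : ℝ)⁻¹ (n + ρ) / qPoch (Fintype.card F : ℝ)⁻¹ n) := by
  set Q : ℝ := (Fintype.card F : ℝ)
  have hterm : ∀ i ∈ range ρ, ((Fintype.card F ^ (n + ρ) - Fintype.card F ^ i : ℕ) : ℝ) =
      Q ^ (n + ρ) * (1 - Q⁻¹ ^ (n + ρ - i)) := fun i hi => by
    have hi : i ≤ n + ρ := by have := mem_range.1 hi; omega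
    rw [Nat.cast_sub (Nat.pow_le_pow_right Fintype.card_pos hi), Nat.cast_pow, Nat.cast_pow,
      pow_sub_pow_eq_mul_one_sub (by positivity) hi]
  rw [surCount_eq_prod (Nat.le_add_left ρ n), Nat.cast_prod, prod_congr rfl hterm,
    prod_mul_distrib, prod_const, card_range, ← pow_mul, qPoch_add,
    mul_div_cancel_left₀ _ (qPoch_ne_zero
      (abs_inv_lt_one_of_one_lt (Nat.one_lt_cast.2 Fintype.one_lt_card)) n)]

lemma eulerTerm_add_mul {u : ℝ} (hu : |u| < 1) (hu₀ : u ≠ 0) (x : ℝ) (n ρ : ℕ) :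
    eulerTerm u x (n + ρ) * (u⁻¹ ^ ((n + ρ) * ρ) * (qPoch u (n + ρ) / qPoch u n)) =
      x ^ ρ * u⁻¹ ^ (ρ + 1).choose 2 * eulerTerm u x n := by
  have hchoose : (n + ρ).choose 2 + (ρ + 1).choose 2 = n.choose 2 + (n + ρ) * ρ := by
    have : (((n + ρ).choose 2 + (ρ + 1).choose 2 : ℕ) : ℚ) = (n.choose 2 + (n + ρ) * ρ : ℕ) := by
      push_cast [Nat.cast_choose_two]
      ring
    exact_mod_cast this
  have hpow : u ^ (n + ρ).choose 2 * u⁻¹ ^ ((n + ρ) * ρ) =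
      u⁻¹ ^ (ρ + 1).choose 2 * u ^ n.choose 2 := by
    rw [inv_pow, inv_pow, ← div_eq_mul_inv, ← div_eq_inv_mul,
      div_eq_div_iff (pow_ne_zero _ hu₀) (pow_ne_zero _ hu₀), ← pow_add, ← pow_add, hchoose]
  have := qPoch_ne_zero hu (n + ρ)
  have := qPoch_ne_zero hu n
  simp only [eulerTerm]
  field_simp
  linear_combination x ^ (n + ρ) * hpow

theorem hasSum_eulerTerm_mul_surCount (F : Type) [Field F] [Fintype F] (x : ℝ) (ρ : ℕ) :
    HasSum (fun l => eulerTerm (Fintype.card F : ℝ)⁻¹ x l * surCount F l ρ)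
      (x ^ ρ * (Fintype.card F : ℝ) ^ (ρ + 1).choose 2 *
        ∑' m, eulerTerm (Fintype.card F : ℝ)⁻¹ x m) := by
  set Q : ℝ := (Fintype.card F : ℝ)
  have hu := abs_inv_lt_one_of_one_lt (Nat.one_lt_cast.2 (Fintype.one_lt_card (α := F)))
  rw [← hasSum_nat_add_iff' ρ, sum_eq_zero fun i hi => by simp [surCount_eq_zero (mem_range.1 hi)],
    sub_zero]
  have hshift (n : ℕ) : eulerTerm Q⁻¹ x (n + ρ) * surCount F (n + ρ) ρ =
      x ^ ρ * Q ^ (ρ + 1).choose 2 * eulerTerm Q⁻¹ x n := by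
    have h := eulerTerm_add_mul hu (by positivity) x n ρ
    rw [inv_inv] at h
    rw [surCount_add_eq, h]
  simp_rw [hshift]
  exact (summable_eulerTerm hu x).hasSum.mul_left _

lemma rpow_neg_natCast_eq_inv_pow {q : ℝ} (hq : 0 ≤ q) (k : ℕ) : q ^ (-(k : ℝ)) = q⁻¹ ^ k := by
  rw [Real.rpow_neg hq, Real.rpow_natCast, inv_pow]

lemma rpow_sub_mul_natCast {q : ℝ} (hq : 0 < q) (a t : ℝ) (m : ℕ) :
    q ^ (a - t * m) = (q ^ (-t)) ^ m * q ^ a := by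
  rw [sub_eq_neg_add, Real.rpow_add hq, neg_mul_eq_neg_mul, Real.rpow_mul_natCast hq.le]

lemma etaQ_eq_qPoch {q : ℝ} (hq : 0 ≤ q) (k : ℕ) : etaQ q k = qPoch q⁻¹ k :=
  prod_congr rfl fun i _ => by
    rw [← rpow_neg_natCast_eq_inv_pow hq, Nat.cast_succ, neg_add']

lemma tprod_one_add_rpow {q : ℝ} (hq : 1 < q) (t : ℝ) :
    ∏' i : ℕ, (1 + q ^ (-(i : ℝ) - t)) = ∑' m, eulerTerm q⁻¹ (q ^ (-t)) m := by
  have hq₀ : 0 < q := one_pos.trans hq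
  refine HasProd.tprod_eq ?_
  convert hasProd_one_add_mul_pow (abs_inv_lt_one_of_one_lt hq) (q ^ (-t)) using 2 with i
  rw [sub_eq_add_neg, Real.rpow_add hq₀, rpow_neg_natCast_eq_inv_pow hq₀.le, mul_comm]

lemma rpow_div_etaQ_mul_tprod_eq {q : ℝ} (hq : 1 < q) (t : ℝ) (l : ℕ) :
    q ^ (-((l : ℝ) * ((l : ℝ) - 1)) / 2 - t * l) /
        (etaQ q l * ∏' i : ℕ, (1 + q ^ (-(i : ℝ) - t))) =
      eulerTerm q⁻¹ (q ^ (-t)) l / ∑' m, eulerTerm q⁻¹ (q ^ (-t)) m := by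
  have hq₀ : 0 < q := one_pos.trans hq
  rw [tprod_one_add_rpow hq, etaQ_eq_qPoch hq₀.le, ← div_div, eulerTerm, neg_div,
    ← Nat.cast_choose_two, rpow_sub_mul_natCast hq₀, rpow_neg_natCast_eq_inv_pow hq₀.le]

theorem stmt_0_general (q : ℕ) (F : Type) [Field F] [Fintype F]
    (hF : Fintype.card F = q) (t : ℝ) (ν : ℕ → ℝ)
    (hν : ∀ l : ℕ, ν l =
      (q : ℝ) ^ (-((l : ℝ) * ((l : ℝ) - 1)) / 2 - t * (l : ℝ)) /
        (etaQ (q : ℝ) l * ∏' i : ℕ, (1 + (q : ℝ) ^ (-(i : ℝ) - t)))) :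
    (∀ ρ : ℕ,
      HasSum (fun l : ℕ => ν l * (surCount F l ρ : ℝ))
        ((q : ℝ) ^ ((((ρ : ℝ) ^ 2 + (ρ : ℝ)) / 2) - t * (ρ : ℝ)))) ∧
    HasSum ν 1 := by
  subst hF
  set Q : ℝ := (Fintype.card F : ℝ) with hQdef
  have hQ : 1 < Q := Nat.one_lt_cast.2 Fintype.one_lt_card
  set S := ∑' m, eulerTerm Q⁻¹ (Q ^ (-t)) m with hSdef
  have hS : S ≠ 0 := (one_pos.trans_le (one_le_tsum_eulerTerm (by positivity)
    (inv_lt_one_of_one_lt₀ hQ) (by positivity))).ne'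
  have hmoment (ρ : ℕ) :
      HasSum (fun l => ν l * surCount F l ρ) ((Q ^ (-t)) ^ ρ * Q ^ (ρ + 1).choose 2) := by
    have h := (hasSum_eulerTerm_mul_surCount F (Q ^ (-t)) ρ).div_const S
    rw [← hQdef, ← hSdef, mul_div_assoc, div_self hS, mul_one] at h
    exact h.congr_fun fun l => by rw [hν, rpow_div_etaQ_mul_tprod_eq hQ, div_mul_eq_mul_div]
  refine ⟨fun ρ => ?_, by simpa [surCount_eq_prod] using hmoment 0⟩
  have hexp : ((ρ : ℝ) ^ 2 + ρ) / 2 = ((ρ + 1).choose 2 : ℕ) := by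
    rw [Nat.cast_choose_two]
    push_cast
    ring
  rw [rpow_sub_mul_natCast (one_pos.trans hQ), hexp, Real.rpow_natCast]
  exact hmoment ρ

/-- Let `q` be a prime power, `F` a finite field with `q` elements, and `t > 0`
a real number.  With `ν(λ) = q^{-λ(λ-1)/2 - tλ} / (η_q(λ) ∏_{i=0}^∞ (1 + q^{-i-t}))`, for
every `ρ ∈ ℕ` the series `∑_λ ν(λ) |Sur_F(F^λ, F^ρ)|` converges with sum
`q^{(ρ²+ρ)/2 - tρ}`; in particular (`ρ = 0`) `∑_λ ν(λ) = 1`. -/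
theorem stmt_0 (q : ℕ) (hq : IsPrimePow q) (F : Type) [Field F] [Fintype F]
    (hF : Fintype.card F = q) (t : ℝ) (ht : 0 < t) (ν : ℕ → ℝ)
    (hν : ∀ l : ℕ, ν l =
      (q : ℝ) ^ (-((l : ℝ) * ((l : ℝ) - 1)) / 2 - t * (l : ℝ)) /
        (etaQ (q : ℝ) l * ∏' i : ℕ, (1 + (q : ℝ) ^ (-(i : ℝ) - t)))) :
    (∀ ρ : ℕ,
      HasSum (fun l : ℕ => ν l * (surCount F l ρ : ℝ))
        ((q : ℝ) ^ ((((ρ : ℝ) ^ 2 + (ρ : ℝ)) / 2) - t * (ρ : ℝ)))) ∧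
    HasSum ν 1 :=
  stmt_0_general q F hF t ν hν
end

section
/- Let q be a prime power. Then Pf_q(t,m) > 0 for every real number t ≥ 0 and every m ∈ ℕ. -/
/-!
Write `x = q^{-(t+1)}`. Then `Pf_q(t,m) = ∑ (-1)^e x^e [m, e]`, where `[m, e] = η(m) / (η(e) η(m-e))`
is the Gaussian binomial coefficient in `q⁻¹`, so it is an alternating sum, and it suffices that its
terms strictly decrease. The ratio of consecutive terms is `x (1 - q^{-(m-e)}) / (1 - q^{-(e+1)})`,
which is `< 1` because `x ≤ q⁻¹ ≤ 1 - q⁻¹` as soon as `q ≥ 2`.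
-/

open scoped BigOperators

/-- `Pf_q(t,m) = ∑_{e=0}^{m} (-1)^e q^{-(t+1)e} η_q(m) / (η_q(e) η_q(m-e))`. -/
noncomputable def Pf (q t : ℝ) (m : ℕ) : ℝ :=
  ∑ e ∈ Finset.range (m + 1),
    (-1 : ℝ) ^ e * q ^ (-(t + 1) * (e : ℝ)) * etaQ q m / (etaQ q e * etaQ q (m - e))

open Finset

theorem alternating_sum_pos {R : Type*} [Ring R] [PartialOrder R] [IsStrictOrderedRing R] :
    ∀ {a : ℕ → R} (n : ℕ), (∀ e < n, a (e + 1) < a e) → 0 < a n →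
      0 < ∑ e ∈ range (n + 1), (-1) ^ e * a e
  | _, 0, _, hlast => by simpa using hlast
  | _, 1, hdec, _ => by simpa [sum_range_succ, ← sub_eq_add_neg] using hdec 0 one_pos
  | a, n + 2, hdec, hlast => by
    have htail := alternating_sum_pos (a := fun e => a (e + 2)) n
      (fun e he => hdec (e + 2) (by omega)) hlast
    have hfirst : 0 < a 0 - a 1 := sub_pos.2 (hdec 0 (by omega))
    have hsplit : ∑ e ∈ range (n + 3), (-1) ^ e * a e =
        (a 0 - a 1) + ∑ e ∈ range (n + 1), (-1) ^ e * a (e + 2) := by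
      rw [sum_range_succ', sum_range_succ']
      simp only [pow_succ, pow_zero, mul_neg, mul_one, neg_neg, neg_mul, one_mul]
      abel
    rw [hsplit]
    exact add_pos hfirst htail

section Eta

variable {q : ℝ}

theorem rpow_neg_natCast_sub_one_le_inv (hq : 1 ≤ q) (k : ℕ) : q ^ (-(k : ℝ) - 1) ≤ q⁻¹ := by
  rw [← Real.rpow_neg_one]
  exact Real.rpow_le_rpow_of_exponent_le hq (by linarith [k.cast_nonneg (α := ℝ)])

theorem rpow_neg_natCast_sub_one_lt_one (hq : 1 < q) (k : ℕ) : q ^ (-(k : ℝ) - 1) < 1 :=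
  Real.rpow_lt_one_of_one_lt_of_neg hq (by linarith [k.cast_nonneg (α := ℝ)])

theorem etaQ_succ (q : ℝ) (k : ℕ) : etaQ q (k + 1) = etaQ q k * (1 - q ^ (-(k : ℝ) - 1)) :=
  prod_range_succ _ k

theorem etaQ_pos (hq : 1 < q) (k : ℕ) : 0 < etaQ q k :=
  prod_pos fun i _ => sub_pos.2 (rpow_neg_natCast_sub_one_lt_one hq i)

noncomputable def etaBinom (q : ℝ) (m e : ℕ) : ℝ := etaQ q m / (etaQ q e * etaQ q (m - e))

theorem etaBinom_pos (hq : 1 < q) (m e : ℕ) : 0 < etaBinom q m e :=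
  div_pos (etaQ_pos hq m) (mul_pos (etaQ_pos hq e) (etaQ_pos hq _))

theorem etaBinom_succ_mul (hq : 1 < q) (e j : ℕ) :
    etaBinom q (e + j + 1) (e + 1) * (1 - q ^ (-(e : ℝ) - 1)) =
      etaBinom q (e + j + 1) e * (1 - q ^ (-(j : ℝ) - 1)) := by
  have hA := (sub_pos.2 (rpow_neg_natCast_sub_one_lt_one hq e)).ne'
  have hB := (sub_pos.2 (rpow_neg_natCast_sub_one_lt_one hq j)).ne'
  have hη := fun k => (etaQ_pos hq k).ne'
  rw [etaBinom, etaBinom, show e + j + 1 - (e + 1) = j by omega,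
    show e + j + 1 - e = j + 1 by omega, etaQ_succ q e, etaQ_succ q j]
  field_simp

theorem etaBinom_mul_pow_succ_lt (hq : 2 ≤ q) {x : ℝ} (hx : 0 < x) (hxq : x ≤ q⁻¹) {m e : ℕ}
    (he : e < m) : x ^ (e + 1) * etaBinom q m (e + 1) < x ^ e * etaBinom q m e := by
  obtain ⟨j, rfl⟩ : ∃ j, m = e + j + 1 := ⟨m - e - 1, by omega⟩
  have hq1 : 1 < q := by linarith
  have hA : 0 < 1 - q ^ (-(e : ℝ) - 1) := sub_pos.2 (rpow_neg_natCast_sub_one_lt_one hq1 e)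
  have hB : 0 < q ^ (-(j : ℝ) - 1) := Real.rpow_pos_of_pos (by linarith) _
  -- `x ≤ q⁻¹ ≤ 1 - q⁻¹ ≤ 1 - q^{-(e+1)}`
  have hratio : x * (1 - q ^ (-(j : ℝ) - 1)) < 1 - q ^ (-(e : ℝ) - 1) := by
    have hinv : q⁻¹ ≤ 2⁻¹ := inv_anti₀ two_pos hq
    nlinarith [rpow_neg_natCast_sub_one_le_inv hq1.le e]
  have hpos : 0 < x ^ e * etaBinom q (e + j + 1) e := mul_pos (pow_pos hx e) (etaBinom_pos hq1 _ _)
  refine lt_of_mul_lt_mul_right ?_ hA.le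
  calc x ^ (e + 1) * etaBinom q (e + j + 1) (e + 1) * (1 - q ^ (-(e : ℝ) - 1))
      = x ^ e * etaBinom q (e + j + 1) e * (x * (1 - q ^ (-(j : ℝ) - 1))) := by
        rw [mul_assoc, etaBinom_succ_mul hq1, pow_succ]; ring
    _ < x ^ e * etaBinom q (e + j + 1) e * (1 - q ^ (-(e : ℝ) - 1)) :=
        mul_lt_mul_of_pos_left hratio hpos

end Eta

theorem Pf_eq_sum_etaBinom {q : ℝ} (hq : 0 ≤ q) (t : ℝ) (m : ℕ) :
    Pf q t m = ∑ e ∈ range (m + 1), (-1) ^ e * ((q ^ (-(t + 1))) ^ e * etaBinom q m e) := by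
  refine sum_congr rfl fun e _ => ?_
  rw [Real.rpow_mul_natCast hq, etaBinom]
  ring

theorem Pf_pos_of_two_le {q : ℝ} (hq : 2 ≤ q) {t : ℝ} (ht : 0 ≤ t) (m : ℕ) : 0 < Pf q t m := by
  have hq1 : 1 < q := by linarith
  have hx : 0 < q ^ (-(t + 1)) := Real.rpow_pos_of_pos (by linarith) _
  have hxq : q ^ (-(t + 1)) ≤ q⁻¹ := by
    rw [← Real.rpow_neg_one]
    exact Real.rpow_le_rpow_of_exponent_le hq1.le (by linarith)
  rw [Pf_eq_sum_etaBinom (by linarith)]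
  exact alternating_sum_pos m (fun e he => etaBinom_mul_pow_succ_lt hq hx hxq he)
    (mul_pos (pow_pos hx m) (etaBinom_pos hq1 m m))

/-- For a prime power `q`, `Pf_q(t,m) > 0` for every real `t ≥ 0` and `m ∈ ℕ`. -/
theorem stmt_2 (q : ℕ) (hq : IsPrimePow q) (t : ℝ) (ht : 0 ≤ t) (m : ℕ) :
    0 < Pf (q : ℝ) t m :=
  Pf_pos_of_two_le (by exact_mod_cast hq.two_le) ht m
end

section
/- Let Γ be a finite group and Γ' a proper subgroup of Γ. Let Γ act on the ℂ-vector space of functions f : Γ/Γ' → ℂ by (γ·f)(x) = f(γ⁻¹·x), and let W be the Γ-invariant subspace consisting of those f with ∑_{x ∈ Γ/Γ'} f(x) = 0. If W is a simple ℂ[Γ]-module, then the order of Γ is even. -/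
/-!
If `W` is simple, Schur's lemma makes every `G`-equivariant endomorphism of `W` a scalar. The
orbital operator `(A f)(x) = ∑_{(x, y) ∈ O} f(y)` of a `G`-orbit `O` of pairs of cosets
preserves `W`, and being scalar on the differences `δ_u - δ_v` forces all off-diagonal entries
of `A` to be equal; hence `G` acts 2-transitively on `G ⧸ H`. An element `g` swapping two
distinct cosets `x` and `y` has `g²` fixing `x` while `g` does not, so `g` is not a power of
`g²`: the order of `g` is even, and it divides `|G|`.
-/

open scoped BigOperators

/-- The linear functional `f ↦ ∑_x f(x)` on the space of functions `X → k`. -/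
noncomputable def sumLin (X : Type*) [Fintype X] (k : Type*) [CommRing k] :
    (X → k) →ₗ[k] k where
  toFun f := ∑ x, f x
  map_add' f g := by simp [Finset.sum_add_distrib]
  map_smul' c f := by simp [Finset.mul_sum]

/-- The subspace `W = {f : G⧸H → k | ∑_x f(x) = 0}` of the space of `k`-valued functions
on the coset space `G ⧸ H`. -/
noncomputable def zeroSumFns (G : Type*) [Group G] (H : Subgroup G) [Fintype (G ⧸ H)]
    (k : Type*) [CommRing k] : Submodule k ((G ⧸ H) → k) :=
  LinearMap.ker (sumLin (G ⧸ H) k)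

/-- The representation of `G` on `W = {f : G⧸H → k | ∑_x f(x) = 0}`, where
`(γ · f)(x) = f(γ⁻¹ · x)`. -/
noncomputable def cosetRep (G : Type*) [Group G] (H : Subgroup G) [Fintype (G ⧸ H)]
    (k : Type*) [CommRing k] : Representation k G (zeroSumFns G H k) where
  toFun γ :=
    { toFun := fun f => ⟨fun x => f.1 (γ⁻¹ • x), by
        have hf : ∑ x, f.1 x = 0 := f.2
        have : ∑ x, f.1 (γ⁻¹ • x) = ∑ x, f.1 x :=
          Fintype.sum_equiv (MulAction.toPerm (γ⁻¹ : G)) _ _ (fun x => rfl)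
        show ∑ x, f.1 (γ⁻¹ • x) = 0
        rw [this, hf]⟩
      map_add' := fun f g => rfl
      map_smul' := fun c f => rfl }
  map_one' := by
    apply LinearMap.ext
    intro f
    apply Subtype.ext
    funext x
    show f.1 ((1 : G)⁻¹ • x) = f.1 x
    simp
  map_mul' γ δ := by
    apply LinearMap.ext
    intro f
    apply Subtype.ext
    funext x
    show f.1 ((γ * δ)⁻¹ • x) = f.1 (δ⁻¹ • γ⁻¹ • x)
    rw [mul_inv_rev, mul_smul]

open Matrix Representation MulAction

theorem even_orderOf_of_sq_smul_eq {G X : Type*} [Group G] [MulAction G X] {g : G} {x : X}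
    (hsq : g ^ 2 • x = x) (hg : g • x ≠ x) : Even (orderOf g) := by
  by_contra hodd
  obtain ⟨m, hm⟩ := exists_pow_eq_self_of_coprime
    (Nat.coprime_two_left.mpr (Nat.not_even_iff_odd.mp hodd))
  exact hg (hm ▸ (stabilizer G x).pow_mem hsq m)

section InvariantKernel

variable {G X k : Type*} [Group G] [MulAction G X] [Fintype X] [Semiring k]
  {A : Matrix X X k}

theorem sum_col_eq_of_smul_invariant [IsPretransitive G X]
    (hA : ∀ (g : G) x y, A (g • x) (g • y) = A x y) (y y' : X) :
    ∑ x, A x y = ∑ x, A x y' := by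
  obtain ⟨g, rfl⟩ := exists_smul_eq G y y'
  rw [← Equiv.sum_comp (toPerm g) (fun x => A x (g • y))]
  simp only [toPerm_apply, hA]

theorem sum_mulVec_eq_of_sum_col_eq (hcol : ∀ y y', ∑ x, A x y = ∑ x, A x y') (y₀ : X)
    (f : X → k) :
    ∑ x, (A *ᵥ f) x = (∑ x, A x y₀) * ∑ y, f y := by
  simp only [mulVec, dotProduct]
  rw [Finset.sum_comm, Finset.mul_sum]
  exact Finset.sum_congr rfl fun y _ => by rw [← Finset.sum_mul, hcol]

theorem mulVec_comp_smul (hA : ∀ (g : G) x y, A (g • x) (g • y) = A x y) (g : G)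
    (f : X → k) :
    A *ᵥ (fun x => f (g • x)) = fun x => (A *ᵥ f) (g • x) := by
  funext x
  simp only [mulVec, dotProduct]
  rw [← Equiv.sum_comp (toPerm g) (fun y => A (g • x) y * f y)]
  simp only [toPerm_apply, hA]

end InvariantKernel

theorem Representation.IntertwiningMap.exists_eq_smul_of_isIrreducible {k G V : Type*} [Field k]
    [IsAlgClosed k] [Monoid G] [AddCommGroup V] [Module k V] [FiniteDimensional k V]
    {ρ : Representation k G V} [ρ.IsIrreducible] (f : IntertwiningMap ρ ρ) :
    ∃ μ : k, ∀ v, f v = μ • v := by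
  obtain ⟨μ, rfl⟩ := IsIrreducible.algebraMap_intertwiningMap_bijective_of_isAlgClosed.2 f
  exact ⟨μ, fun v => rfl⟩

section CosetSpace

variable {G : Type*} [Group G] {H : Subgroup G} [Fintype (G ⧸ H)] {k : Type*}
  {A : Matrix (G ⧸ H) (G ⧸ H) k}

theorem mulVec_mem_zeroSumFns [CommRing k] (hA : ∀ (g : G) x y, A (g • x) (g • y) = A x y)
    {f : G ⧸ H → k} (hf : f ∈ zeroSumFns G H k) : A *ᵥ f ∈ zeroSumFns G H k := by
  have hf : ∑ x, f x = 0 := hf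
  show ∑ x, (A *ᵥ f) x = 0
  rw [sum_mulVec_eq_of_sum_col_eq (sum_col_eq_of_smul_invariant hA) ((1 : G) : G ⧸ H), hf,
    mul_zero]

theorem single_sub_single_mem_zeroSumFns [CommRing k] [DecidableEq (G ⧸ H)] (u v : G ⧸ H) :
    Pi.single u 1 - Pi.single v 1 ∈ zeroSumFns G H k := by
  show ∑ x, (Pi.single u 1 - Pi.single v 1 : G ⧸ H → k) x = 0
  simp

variable (H) in
noncomputable def mulVecIntertwiningMap [CommRing k] (A : Matrix (G ⧸ H) (G ⧸ H) k)
    (hA : ∀ (g : G) x y, A (g • x) (g • y) = A x y) :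
    IntertwiningMap (cosetRep G H k) (cosetRep G H k) :=
  LinearMap.intertwiningMap_of_isIntertwiningMap _ _
    (A.mulVecLin.restrict fun _ => mulVec_mem_zeroSumFns hA)
    fun g f => Subtype.ext (mulVec_comp_smul hA g⁻¹ f.1)

theorem exists_mulVec_eq_smul_of_isSimpleModule [Field k] [IsAlgClosed k]
    (hsimple : IsSimpleModule (MonoidAlgebra k G) (cosetRep G H k).asModule)
    (hA : ∀ (g : G) x y, A (g • x) (g • y) = A x y) :
    ∃ μ : k, ∀ f ∈ zeroSumFns G H k, A *ᵥ f = μ • f := by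
  have := (irreducible_iff_isSimpleModule_asModule _).mpr hsimple
  obtain ⟨μ, hμ⟩ := (mulVecIntertwiningMap H A hA).exists_eq_smul_of_isIrreducible
  exact ⟨μ, fun f hf => congrArg Subtype.val (hμ ⟨f, hf⟩)⟩

theorem apply_eq_apply_of_isSimpleModule [Field k] [IsAlgClosed k]
    (hsimple : IsSimpleModule (MonoidAlgebra k G) (cosetRep G H k).asModule)
    (hA : ∀ (g : G) x y, A (g • x) (g • y) = A x y) {u v u' v' : G ⧸ H}
    (huv : u ≠ v) (huv' : u' ≠ v') : A u v = A u' v' := by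
  classical
  obtain ⟨μ, hμ⟩ := exists_mulVec_eq_smul_of_isSimpleModule hsimple hA
  have h_offDiag : ∀ {x y}, x ≠ y → A x y = A x x - μ := fun {x y} hxy => by
    have := congrFun (hμ _ (single_sub_single_mem_zeroSumFns (k := k) x y)) x
    simp only [mulVec_sub, Pi.sub_apply, mulVec_single_one, col_apply, Pi.smul_apply,
      Pi.single_eq_same, Pi.single_eq_of_ne hxy, sub_zero, smul_eq_mul, mul_one] at this
    linear_combination -this
  have h_diag : A u u = A u' u' := by
    obtain ⟨g, rfl⟩ := exists_smul_eq G u u'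
    exact (hA g u u).symm
  rw [h_offDiag huv, h_offDiag huv', h_diag]

theorem exists_smul_eq_and_smul_eq_of_isSimpleModule [Field k] [IsAlgClosed k]
    (hsimple : IsSimpleModule (MonoidAlgebra k G) (cosetRep G H k).asModule)
    {u v u' v' : G ⧸ H} (huv : u ≠ v) (huv' : u' ≠ v') :
    ∃ g : G, g • u = u' ∧ g • v = v' := by
  classical
  let A : Matrix (G ⧸ H) (G ⧸ H) k := fun x y => if (x, y) ∈ orbit G (u, v) then 1 else 0
  have hA : ∀ (g : G) x y, A (g • x) (g • y) = A x y := fun g x y => by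
    simp only [A, ← Prod.smul_mk, ← orbit_eq_iff, orbit_smul]
  have hA_eq := apply_eq_apply_of_isSimpleModule hsimple hA huv huv'
  obtain ⟨g, hg⟩ : (u', v') ∈ orbit G (u, v) := by
    by_contra h
    simp [A, h, mem_orbit_self] at hA_eq
  exact ⟨g, congrArg Prod.fst hg, congrArg Prod.snd hg⟩

end CosetSpace

/-- Let `Γ` be a finite group and `Γ'` a proper subgroup.  Let `Γ` act on the
functions `Γ⧸Γ' → ℂ` by `(γ·f)(x) = f(γ⁻¹·x)` and let `W` be the invariant subspace of
functions summing to zero.  If `W` is a simple `ℂ[Γ]`-module, then `|Γ|` is even. -/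
theorem stmt_10 (G : Type) [Group G] [Fintype G] (H : Subgroup G) (hH : H ≠ ⊤)
    [Fintype (G ⧸ H)]
    (hsimple : IsSimpleModule (MonoidAlgebra ℂ G) (cosetRep G H ℂ).asModule) :
    Even (Fintype.card G) := by
  obtain ⟨g₀, hg₀⟩ := SetLike.exists_not_mem_of_ne_top H hH
  have hne : ((1 : G) : G ⧸ H) ≠ g₀ := by
    simpa [QuotientGroup.eq] using hg₀
  obtain ⟨g, hg, hg'⟩ := exists_smul_eq_and_smul_eq_of_isSimpleModule hsimple hne hne.symm
  have h_even : Even (orderOf g) :=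
    even_orderOf_of_sq_smul_eq (by rw [sq, mul_smul, hg, hg']) (hg ▸ hne.symm)
  exact even_iff_two_dvd.mpr (h_even.two_dvd.trans orderOf_dvd_card)
end

section
/- Let Λ be a ring, let A be a Λ-module with finitely many elements, and let G be a Λ-module with finitely many elements. Then |G| · ∑_{a ∈ A} |Sur_Λ(A/Λa, G)| = |A| · |Sur_Λ(A, G)|, where Λa denotes the submodule of A generated by a and |Sur_Λ(M, G)| denotes the number of surjective Λ-module homomorphisms M → G. Equivalently, the average over a uniformly random a ∈ A of the number of surjective Λ-module homomorphisms A/Λa → G equals |Sur_Λ(A,G)| / |G|. -/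
/-!
A map `A ⧸ Λa → G` is the same as a map `A → G` killing `a`, so the left-hand side counts the
pairs `(a, g)` with `g : A → G` surjective and `g a = 0`, weighted by `|G|`. Counting instead by
`g`, the admissible `a` form `ker g`, and `|G| ⬝ |ker g| = |A|` for every surjective `g`.
-/

open Function LinearMap

section

variable {R M N : Type*} [Ring R] [AddCommGroup M] [Module R M] [AddCommGroup N] [Module R N]

def Submodule.liftQEquiv (p : Submodule R M) :
    (M ⧸ p →ₗ[R] N) ≃ {g : M →ₗ[R] N // p ≤ ker g} where
  toFun f := ⟨f ∘ₗ p.mkQ, p.ker_mkQ.ge.trans (ker_le_ker_comp _ _)⟩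
  invFun g := p.liftQ g g.2
  left_inv _ := p.linearMap_qext rfl
  right_inv g := Subtype.ext (p.liftQ_mkQ g.1 g.2)

theorem Submodule.card_surjective_quotient (p : Submodule R M) :
    Nat.card {f : M ⧸ p →ₗ[R] N // Surjective f}
      = Nat.card {g : M →ₗ[R] N // p ≤ ker g ∧ Surjective g} := by
  rw [← Nat.card_congr (Equiv.subtypeSubtypeEquivSubtypeInter (fun g : M →ₗ[R] N => p ≤ ker g) _)]
  exact Nat.card_congr <|
    p.liftQEquiv.subtypeEquiv fun f => (Surjective.of_comp_iff f p.mkQ_surjective).symm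

theorem Submodule.card_surjective_quotient_span_singleton (x : M) :
    Nat.card {f : M ⧸ R ∙ x →ₗ[R] N // Surjective f}
      = Nat.card {g : M →ₗ[R] N // g x = 0 ∧ Surjective g} := by
  simp only [card_surjective_quotient, Submodule.span_singleton_le_iff_mem, mem_ker]

theorem LinearMap.card_eq_card_ker_mul_card_of_surjective (f : M →ₗ[R] N) (hf : Surjective f) :
    Nat.card M = Nat.card (ker f) * Nat.card N := by
  rw [(ker f).card_eq_card_quotient_mul_card,
    Nat.card_congr (f.quotKerEquivOfSurjective hf).toEquiv]

theorem card_mul_sum_card_surjective_apply_eq_zero [Fintype M] [Finite N] :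
    Nat.card N * ∑ x : M, Nat.card {g : M →ₗ[R] N // g x = 0 ∧ Surjective g}
      = Nat.card M * Nat.card {g : M →ₗ[R] N // Surjective g} := by
  have : Finite (M →ₗ[R] N) := Finite.of_injective _ DFunLike.coe_injective
  have : Fintype {g : M →ₗ[R] N // Surjective g} := Fintype.ofFinite _
  let pairs : (Σ x : M, {g : M →ₗ[R] N // g x = 0 ∧ Surjective g})
      ≃ Σ g : {g : M →ₗ[R] N // Surjective g}, ker g.1 :=
    { toFun := fun ⟨x, g, hx, hg⟩ => ⟨⟨g, hg⟩, x, hx⟩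
      invFun := fun ⟨⟨g, hg⟩, x, hx⟩ => ⟨x, g, hx, hg⟩
      left_inv := fun ⟨_, _, _, _⟩ => rfl
      right_inv := fun ⟨⟨_, _⟩, _, _⟩ => rfl }
  rw [← Nat.card_sigma, Nat.card_congr pairs, Nat.card_sigma, Finset.mul_sum]
  calc ∑ g : {g : M →ₗ[R] N // Surjective g}, Nat.card N * Nat.card (ker g.1)
      _ = ∑ _g : {g : M →ₗ[R] N // Surjective g}, Nat.card M := by
        refine Finset.sum_congr rfl fun g _ => ?_
        rw [g.1.card_eq_card_ker_mul_card_of_surjective g.2, mul_comm]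
      _ = Nat.card M * Nat.card {g : M →ₗ[R] N // Surjective g} := by
        rw [Finset.sum_const, Finset.card_univ, ← Nat.card_eq_fintype_card, smul_eq_mul, mul_comm]

end

/-- Let `Λ` be a ring and `A`, `G` finite `Λ`-modules.  Then
`|G| ⬝ ∑_{a ∈ A} |Sur_Λ(A/Λa, G)| = |A| ⬝ |Sur_Λ(A, G)|`, i.e. the average over a uniform
random `a ∈ A` of the number of surjective `Λ`-module maps `A/Λa → G` is
`|Sur_Λ(A,G)|/|G|`. -/
theorem stmt_12 (Λ : Type*) [Ring Λ] (A G : Type*)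
    [AddCommGroup A] [Module Λ A] [Fintype A]
    [AddCommGroup G] [Module Λ G] [Finite G] :
    Nat.card G *
        ∑ a : A, Nat.card
          {f : (A ⧸ Submodule.span Λ ({a} : Set A)) →ₗ[Λ] G // Function.Surjective f}
      = Nat.card A * Nat.card {f : A →ₗ[Λ] G // Function.Surjective f} := by
  simp_rw [Submodule.card_surjective_quotient_span_singleton]
  exact card_mul_sum_card_surjective_apply_eq_zero
end

section
/- Let p be a prime, d ≥ 1 an integer, q = p^d, and R = W(𝔽_q). For every partition λ, the second exterior power ⋀²_R N_λ of the R-module N_λ = ⊕_j R/(p^{λ_j} R), taken over R, is a finite R-module of cardinality q^{∑_j (j−1)λ_j}. -/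
open scoped BigOperators DirectSum TensorProduct

/-- `R = W(𝔽_q)`, `q = p^d`, realized as the Witt vectors of the field with `p^d`
elements. -/
abbrev Rw (p : ℕ) [Fact p.Prime] (d : ℕ) : Type := WittVector p (GaloisField p d)

/-- `N_μ = ⊕_j R/(p^{μ_j} R)` (`0`-based indexing: `μ j = μ_{j+1}`). -/
noncomputable abbrev Nmod (p : ℕ) [Fact p.Prime] (d : ℕ) (μ : ℕ → ℕ) : Type :=
  ⨁ j : ℕ, (Rw p d) ⧸ (Ideal.span {(p : Rw p d) ^ (μ j)})

/-- `⋀²_R M`: the quotient of `M ⊗_R M` by the submodule generated by the elements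
`m ⊗ m`. -/
noncomputable abbrev Lambda2 (R : Type*) [CommRing R] (M : Type*) [AddCommGroup M]
    [Module R M] : Type _ :=
  (M ⊗[R] M) ⧸ Submodule.span R {x : M ⊗[R] M | ∃ m : M, x = m ⊗ₜ[R] m}


/-!
Write `M = ⨁ j, R ⧸ I j` with `I j = (p ^ λ_j)`, an increasing chain of ideals. For `i < j` the
alternating pairing `(x, y) ↦ x_i y_j - y_i x_j`, with values in `R ⧸ I j` (reducing `x_i` along
`R ⧸ I i ↠ R ⧸ I j`), identifies `⋀² M` with `⨁_{i < j} R ⧸ I j`: the class of `e_i ⊗ e_j` goes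
to the `(i, j)`-th unit vector, and these classes span `⋀² M` because it is alternating.
Over `R = W(𝔽_q)` the quotient `R ⧸ (p ^ n)` is the ring of truncated Witt vectors of length `n`,
of cardinality `q ^ n`, so `|⋀² M| = ∏_{i < j} q ^ λ_j`.
-/

open DirectSum TensorProduct

namespace Lambda2

section

variable {R : Type*} [CommRing R] {M : Type*} [AddCommGroup M] [Module R M]

theorem mk_tmul_self (m : M) :
    (Submodule.Quotient.mk (m ⊗ₜ[R] m) : Lambda2 R M) = 0 :=
  (Submodule.Quotient.mk_eq_zero _).mpr (Submodule.subset_span ⟨m, rfl⟩)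

theorem mk_tmul_comm (x y : M) :
    (Submodule.Quotient.mk (x ⊗ₜ[R] y) : Lambda2 R M) = -Submodule.Quotient.mk (y ⊗ₜ[R] x) := by
  have h := mk_tmul_self (R := R) (x + y)
  rw [add_tmul, tmul_add, tmul_add, Submodule.Quotient.mk_add, Submodule.Quotient.mk_add,
    Submodule.Quotient.mk_add, mk_tmul_self, mk_tmul_self] at h
  rw [eq_neg_iff_add_eq_zero]
  simpa using h

end

variable {R : Type*} [CommRing R] (I : ℕ → Ideal R)

noncomputable def gen (i : ℕ) : ⨁ j, R ⧸ I j := lof R ℕ (fun j => R ⧸ I j) i 1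

theorem gen_apply (i j : ℕ) : gen I i j = if i = j then 1 else 0 := by
  split_ifs with h
  · subst h; exact DirectSum.lof_apply ..
  · exact DirectSum.of_eq_of_ne _ _ _ (Ne.symm h)

theorem lof_mk (i : ℕ) (r : R) :
    lof R ℕ (fun j => R ⧸ I j) i (Ideal.Quotient.mk (I i) r) = r • gen I i := by
  rw [gen, ← map_smul, Algebra.smul_def, mul_one]; rfl

variable {I} in
theorem gen_eq_zero {j : ℕ} (hj : I j = ⊤) : gen I j = 0 := by
  have := Ideal.Quotient.subsingleton_iff.mpr hj
  rw [gen, Subsingleton.elim (1 : R ⧸ I j) 0, map_zero]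

/-- `⨁_{i < j < N} R ⧸ I j`, indexed by `j : Fin N` and `i : Fin j`. -/
abbrev Model (N : ℕ) : Type _ := (j : Fin N) → Fin j → R ⧸ I j

variable {I}

noncomputable def pairing {i j : ℕ} (h : I i ≤ I j) :
    (⨁ j, R ⧸ I j) →ₗ[R] (⨁ j, R ⧸ I j) →ₗ[R] R ⧸ I j :=
  (LinearMap.mul R (R ⧸ I j)).compl₁₂ (Submodule.factor h ∘ₗ component R ℕ _ i)
    (component R ℕ _ j)

variable (hI : Monotone I) (N : ℕ)

noncomputable def toModel : Lambda2 R (⨁ j, R ⧸ I j) →ₗ[R] Model I N :=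
  Submodule.liftQ _
    (LinearMap.pi fun j => LinearMap.pi fun i =>
      lift (pairing (hI i.2.le) - (pairing (hI i.2.le)).flip)) (by
    rw [Submodule.span_le]
    rintro _ ⟨m, rfl⟩
    ext j i
    simp)

theorem toModel_mk_tmul (x y : ⨁ j, R ⧸ I j) (j : Fin N) (i : Fin j) :
    toModel hI N (Submodule.Quotient.mk (x ⊗ₜ y)) j i =
      Submodule.factor (hI i.2.le) (x i) * y j - Submodule.factor (hI i.2.le) (y i) * x j := rfl

theorem toModel_mk_gen_tmul_gen {i j : ℕ} (hij : i < j) (hj : j < N) :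
    toModel hI N (Submodule.Quotient.mk (gen I i ⊗ₜ gen I j)) =
      Pi.single ⟨j, hj⟩ (Pi.single ⟨i, hij⟩ 1) := by
  ext j' i'
  rw [toModel_mk_tmul, gen_apply, gen_apply, gen_apply, gen_apply]
  by_cases hj' : j' = ⟨j, hj⟩
  · subst hj'
    by_cases hi' : i' = ⟨i, hij⟩
    · subst hi'
      simp [hij.ne]
    · have hii' : i ≠ i' := fun h => hi' (Fin.ext h.symm)
      simp [hii', hi', i'.2.ne']
  · have hjj' : j ≠ j' := fun h => hj' (Fin.ext h.symm)
    have hij' : j = i' → i ≠ j' := fun h h' => by have := i'.2; omega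
    by_cases hji : j = i'
    · simp [hjj', hij' hji, Pi.single_eq_of_ne hj']
    · simp [hjj', hji, Pi.single_eq_of_ne hj']

variable (I) in
noncomputable def ofModel : Model I N →ₗ[R] Lambda2 R (⨁ j, R ⧸ I j) :=
  LinearMap.lsum R _ R fun j => LinearMap.lsum R _ R fun i =>
    (Submodule.mkQ _ ∘ₗ TensorProduct.mk R _ _ (gen I i)) ∘ₗ lof R ℕ (fun j => R ⧸ I j) j

theorem ofModel_single (j : Fin N) (i : Fin j) (q : R ⧸ I j) :
    ofModel I N (Pi.single j (Pi.single i q)) =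
      Submodule.Quotient.mk (gen I i ⊗ₜ lof R ℕ (fun j => R ⧸ I j) j q) := by
  rw [ofModel, LinearMap.lsum_piSingle, LinearMap.lsum_piSingle]
  rfl

theorem toModel_comp_ofModel : toModel hI N ∘ₗ ofModel I N = LinearMap.id := by
  refine LinearMap.pi_ext' fun j => LinearMap.pi_ext fun i q => ?_
  obtain ⟨r, rfl⟩ := Ideal.Quotient.mk_surjective q
  simp only [LinearMap.comp_apply, LinearMap.coe_single, LinearMap.id_apply]
  rw [ofModel_single, lof_mk, tmul_smul, Submodule.Quotient.mk_smul,
    map_smul, toModel_mk_gen_tmul_gen hI N i.2 j.2, ← Pi.single_smul, ← Pi.single_smul,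
    Algebra.smul_def, mul_one]
  rfl

variable {N} (htop : ∀ j, N ≤ j → I j = ⊤)
include hI htop

theorem ofModel_toModel_mk_gen_tmul_gen_of_lt {i j : ℕ} (hij : i < j) :
    ofModel I N (toModel hI N (Submodule.Quotient.mk (gen I i ⊗ₜ gen I j))) =
      Submodule.Quotient.mk (gen I i ⊗ₜ gen I j) := by
  by_cases hj : j < N
  · rw [toModel_mk_gen_tmul_gen hI N hij hj, ofModel_single]
    rfl
  · rw [gen_eq_zero (htop j (not_lt.mp hj)), tmul_zero, Submodule.Quotient.mk_zero, map_zero,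
      map_zero]

theorem ofModel_toModel_mk_gen_tmul_gen (i j : ℕ) :
    ofModel I N (toModel hI N (Submodule.Quotient.mk (gen I i ⊗ₜ gen I j))) =
      Submodule.Quotient.mk (gen I i ⊗ₜ gen I j) := by
  rcases lt_trichotomy i j with hij | rfl | hji
  · exact ofModel_toModel_mk_gen_tmul_gen_of_lt hI htop hij
  · rw [mk_tmul_self, map_zero, map_zero]
  · rw [mk_tmul_comm, map_neg, map_neg, ofModel_toModel_mk_gen_tmul_gen_of_lt hI htop hji]

theorem ofModel_comp_toModel : ofModel I N ∘ₗ toModel hI N = LinearMap.id := by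
  ext i j
  exact ofModel_toModel_mk_gen_tmul_gen hI htop i j

noncomputable def directSumQuotientEquiv : Lambda2 R (⨁ j, R ⧸ I j) ≃ₗ[R] Model I N :=
  LinearEquiv.ofLinearMap (toModel hI N) (ofModel I N) (toModel_comp_ofModel hI N)
    (ofModel_comp_toModel hI htop)

theorem card_directSum_quotient :
    Nat.card (Lambda2 R (⨁ j, R ⧸ I j)) = ∏ j ∈ Finset.range N, Nat.card (R ⧸ I j) ^ j := by
  rw [Nat.card_congr (directSumQuotientEquiv hI htop).toEquiv, Nat.card_pi,
    ← Fin.prod_univ_eq_prod_range (fun j => Nat.card (R ⧸ I j) ^ j)]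
  simp only [Nat.card_fun, Nat.card_eq_fintype_card, Fintype.card_fin]

theorem finite_directSum_quotient [∀ j, Finite (R ⧸ I j)] : Finite (Lambda2 R (⨁ j, R ⧸ I j)) :=
  Finite.of_equiv _ (directSumQuotientEquiv hI htop).symm.toEquiv

end Lambda2

namespace WittVector

variable (p : ℕ) [Fact p.Prime] (k : Type*) [CommRing k] [CharP k p] [PerfectRing k p]

theorem ker_truncate (n : ℕ) :
    RingHom.ker (truncate (p := p) (R := k) n) = Ideal.span {(p : WittVector p k) ^ n} := by
  ext x
  rw [mem_ker_truncate, mem_span_p_pow_iff_le_coeff_eq_zero]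

noncomputable def quotientPPowEquiv (n : ℕ) :
    WittVector p k ⧸ Ideal.span {(p : WittVector p k) ^ n} ≃+* TruncatedWittVector p n k :=
  (Ideal.quotEquivOfEq (ker_truncate p k n).symm).trans
    (RingHom.quotientKerEquivOfSurjective (truncate_surjective p n k))

theorem card_quotient_span_p_pow (n : ℕ) :
    Nat.card (WittVector p k ⧸ Ideal.span {(p : WittVector p k) ^ n}) = Nat.card k ^ n := by
  rw [Nat.card_congr (quotientPPowEquiv p k n).toEquiv, TruncatedWittVector, Nat.card_fun,
    Nat.card_eq_fintype_card (α := Fin n), Fintype.card_fin]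

instance finite_quotient_span_p_pow [Finite k] (n : ℕ) :
    Finite (WittVector p k ⧸ Ideal.span {(p : WittVector p k) ^ n}) :=
  Finite.of_equiv (Fin n → k) (quotientPPowEquiv p k n).symm.toEquiv

end WittVector

/-- Let `p` be a prime, `d ≥ 1`, `q = p^d`, `R = W(𝔽_q)`.  For every partition
`λ` (weakly decreasing, vanishing from index `N` on, `0`-based indexing `l i = λ_{i+1}`),
the second exterior power `⋀²_R N_λ` is a finite `R`-module of cardinality
`q^{∑_j (j-1)λ_j}`. -/
theorem stmt_16 (p : ℕ) [Fact p.Prime] (d : ℕ) (hd : 1 ≤ d)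
    (l : ℕ → ℕ) (hmono : ∀ i, l (i + 1) ≤ l i) (N : ℕ) (hN : ∀ i, N ≤ i → l i = 0) :
    Finite (Lambda2 (Rw p d) (Nmod p d l)) ∧
    Nat.card (Lambda2 (Rw p d) (Nmod p d l))
      = (p ^ d) ^ (∑ i ∈ Finset.range N, i * l i) := by
  have hI : Monotone fun j => Ideal.span {(p : Rw p d) ^ l j} := fun i j hij =>
    Ideal.span_singleton_le_span_singleton.mpr (pow_dvd_pow _ (antitone_nat_of_succ_le hmono hij))
  have htop : ∀ j, N ≤ j → Ideal.span {(p : Rw p d) ^ l j} = ⊤ := fun j hj => by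
    simp [hN j hj]
  refine ⟨Lambda2.finite_directSum_quotient hI htop, ?_⟩
  have hcard : ∀ j,
      Nat.card (Rw p d ⧸ Ideal.span {(p : Rw p d) ^ l j}) ^ j = (p ^ d) ^ (j * l j) := fun j => by
    rw [WittVector.card_quotient_span_p_pow, GaloisField.card p d (by omega)]
    ring
  rw [Lambda2.card_directSum_quotient hI htop, Finset.prod_congr rfl fun j _ => hcard j,
    Finset.prod_pow_eq_pow_sum]
end

section
/- Let p be a prime, let d be a positive integer, and let ε be an integer with −1 ≤ ε ≤ 1. Then the real number p^{(1−ε)d/2} equals d if and only if either (ε = 1 and d = 1) or (ε = 0, p = 2, and d = 2 or d = 4). -/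
/-!
For `ε = 1` the exponent vanishes and `p⁰ = 1`. For `ε = -1` the equation reads `p ^ d = d`,
impossible since `d < p ^ d`. For `ε = 0` squaring turns it into `p ^ d = d ^ 2`; as `d ^ 2 < 2 ^ d`
once `d ≥ 5`, only `d ≤ 4` remains, where `p ≤ p ^ d ≤ 16` leaves finitely many cases.
-/

theorem Nat.sq_lt_two_pow_of_five_le {n : ℕ} (hn : 5 ≤ n) : n ^ 2 < 2 ^ n := by
  induction n, hn using Nat.le_induction with
  | base => norm_num
  | succ n hn ih => rw [pow_succ 2 n]; nlinarith

theorem Nat.pow_eq_exponent_sq_iff {p d : ℕ} (hp : 2 ≤ p) :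
    p ^ d = d ^ 2 ↔ p = 2 ∧ (d = 2 ∨ d = 4) := by
  constructor
  · intro h
    have hd5 : d < 5 := by
      by_contra! hd
      have := Nat.pow_le_pow_left hp d
      have := Nat.sq_lt_two_pow_of_five_le hd
      omega
    have hd0 : d ≠ 0 := by rintro rfl; simp at h
    have hp16 : p ≤ 16 :=
      calc p ≤ p ^ d := Nat.le_self_pow hd0 p
        _ = d ^ 2 := h
        _ ≤ 16 := by nlinarith
    interval_cases d <;> interval_cases p <;> simp_all
  · rintro ⟨rfl, rfl | rfl⟩ <;> norm_num

theorem Real.rpow_natCast_div_two_eq_iff {x y : ℝ} (hx : 0 ≤ x) (hy : 0 ≤ y) (n : ℕ) :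
    x ^ ((n : ℝ) / 2) = y ↔ x ^ n = y ^ 2 := by
  rw [div_eq_mul_one_div, Real.rpow_natCast_mul hx, ← Real.sqrt_eq_rpow,
    Real.sqrt_eq_iff_eq_sq (by positivity) hy]

theorem stmt_17_general (p : ℕ) (hp : p.Prime) (d : ℕ) (ε : ℤ)
    (hε₁ : -1 ≤ ε) (hε₂ : ε ≤ 1) :
    (p : ℝ) ^ (((1 - (ε : ℝ)) * (d : ℝ)) / 2) = (d : ℝ) ↔
      ((ε = 1 ∧ d = 1) ∨ (ε = 0 ∧ p = 2 ∧ (d = 2 ∨ d = 4))) := by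
  obtain rfl | rfl | rfl : ε = -1 ∨ ε = 0 ∨ ε = 1 := by omega
  · have hd : d < p ^ d := Nat.lt_pow_self hp.one_lt
    have : (1 - ((-1 : ℤ) : ℝ)) * d / 2 = (d : ℕ) := by push_cast; ring
    rw [this, Real.rpow_natCast]
    norm_cast
    simpa using hd.ne'
  · have : (1 - ((0 : ℤ) : ℝ)) * d / 2 = (d : ℝ) / 2 := by push_cast; ring
    rw [this, Real.rpow_natCast_div_two_eq_iff (Nat.cast_nonneg p) (Nat.cast_nonneg d)]
    norm_cast
    simp [Nat.pow_eq_exponent_sq_iff hp.two_le]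
  · norm_num
    exact_mod_cast eq_comm

/-- For a prime `p`, a positive integer `d`, and `ε ∈ {-1,0,1}`,
the real number `p^((1-ε)d/2)` equals `d` if and only if
(`ε = 1` and `d = 1`) or (`ε = 0`, `p = 2`, and `d ∈ {2,4}`). -/
theorem stmt_17 (p : ℕ) (hp : p.Prime) (d : ℕ) (hd : 1 ≤ d) (ε : ℤ)
    (hε₁ : -1 ≤ ε) (hε₂ : ε ≤ 1) :
    (p : ℝ) ^ (((1 - (ε : ℝ)) * (d : ℝ)) / 2) = (d : ℝ) ↔
      ((ε = 1 ∧ d = 1) ∨ (ε = 0 ∧ p = 2 ∧ (d = 2 ∨ d = 4))) :=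
  stmt_17_general p hp d ε hε₁ hε₂
end
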